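/- arXiv:2106.04289 — 3 statements merged into one kernel-verified Lean document; each statement's English description precedes it below -/
import Mathlib

section
/- In the heavy-rooted-pathwidth decomposition of a rooted tree T, the height of the path tree (the depth of the recursion into heavy paths) is at most rpw(T). -/
/-- Rooted trees. -/
inductive RTree where
  | node : List RTree → RTree

/-- Rooted pathwidth. -/
def RTree.rpw : RTree → ℕ
  | .node ts =>
    let ks := ts.attach.map (fun x => RTree.rpw x.1)
    let k := ks.foldr max 0
    if ks.count k = 1 then k else k + 1
decreasing_by
  have := List.sizeOf_lt_of_mem x.2
  simp [RTree.node.sizeOf_spec]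
  omega

/-- Height (in vertices) of the path tree of the heavy-rooted-pathwidth
decomposition: a leaf gives height `1`; continuing into the heavy child (the
unique child maximizing `rpw`, if it is unique) stays in the same heavy path,
while descending into a light child (any child not maximizing `rpw`, or any child
when the maximum is attained more than once, so that the bound holds under every
tie-breaking) increases the height by one. -/
def RTree.ptHeight : RTree → ℕ
  | .node ts =>
    let k := (ts.map RTree.rpw).foldr max 0
    let cnt := (ts.map RTree.rpw).count k
    (ts.attach.map (fun x =>
      if RTree.rpw x.1 = k ∧ cnt = 1 then RTree.ptHeight x.1
      else RTree.ptHeight x.1 + 1)).foldr max 1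
decreasing_by
  all_goals
    have := List.sizeOf_lt_of_mem x.2
    simp [RTree.node.sizeOf_spec]
    omega


lemma le_foldr_max {a : ℕ} {l : List ℕ} (h : a ∈ l) : a ≤ l.foldr max 0 := by
  induction l with
  | nil => cases h
  | cons b l ih =>
    rcases List.mem_cons.mp h with h | h
    · subst h; exact le_max_left _ _
    · exact le_trans (ih h) (le_max_right _ _)

lemma foldr_max_le {b c : ℕ} {l : List ℕ} (h1 : b ≤ c) (h : ∀ a ∈ l, a ≤ c) :
    l.foldr max b ≤ c := by
  induction l with
  | nil => exact h1
  | cons a l ih => exact max_le (h a (by simp)) (ih fun x hx => h x (by simp [hx]))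

theorem RTree.one_le_rpw : ∀ T : RTree, 1 ≤ T.rpw
  | .node ts => by
    rw [RTree.rpw]
    split
    · rename_i h
      have hk : ((ts.attach.map fun x => RTree.rpw x.1).foldr max 0) ∈
          ts.attach.map fun x => RTree.rpw x.1 :=
        List.count_pos_iff.mp (by omega)
      rcases List.mem_map.mp hk with ⟨x, hx, he⟩
      have := RTree.one_le_rpw x.1
      omega
    · omega
decreasing_by
  have := List.sizeOf_lt_of_mem x.2
  simp [RTree.node.sizeOf_spec]
  omega

theorem RTree.ptHeight_le_rpw : ∀ T : RTree, T.ptHeight ≤ T.rpw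
  | .node ts => by
    rw [RTree.ptHeight, RTree.rpw]
    have hmap : (ts.attach.map fun x => RTree.rpw x.1) = ts.map RTree.rpw := by simp
    rw [hmap]
    set k := (ts.map RTree.rpw).foldr max 0 with hk
    by_cases hcnt : (ts.map RTree.rpw).count k = 1
    · simp only [hcnt, if_pos]
      apply foldr_max_le
      · have hkm : k ∈ ts.map RTree.rpw := List.count_pos_iff.mp (by omega)
        rcases List.mem_map.mp hkm with ⟨x, hx, he⟩
        have := RTree.one_le_rpw x
        omega
      · intro a ha
        rcases List.mem_map.mp ha with ⟨x, hx, he⟩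
        have hrec := RTree.ptHeight_le_rpw x.1
        have hle : RTree.rpw x.1 ≤ k :=
          le_foldr_max (List.mem_map.mpr ⟨x.1, x.2, rfl⟩)
        subst he
        by_cases hrk : RTree.rpw x.1 = k
        · simp only [hrk, hcnt, and_self, if_pos]; omega
        · rw [if_neg (by tauto)]; omega
    · rw [if_neg hcnt]
      apply foldr_max_le (by omega)
      intro a ha
      rcases List.mem_map.mp ha with ⟨x, hx, he⟩
      have hrec := RTree.ptHeight_le_rpw x.1
      have hle : RTree.rpw x.1 ≤ k :=
        le_foldr_max (List.mem_map.mpr ⟨x.1, x.2, rfl⟩)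
      subst he
      rw [if_neg (by tauto)]
      omega
decreasing_by
  all_goals
    have := List.sizeOf_lt_of_mem x.2
    simp [RTree.node.sizeOf_spec]
    omega

/-- the height of the path tree of the heavy-rooted-pathwidth
decomposition of a rooted tree `T` is at most `rpw T`. -/
theorem stmt_8 (T : RTree) : T.ptHeight ≤ T.rpw := by
  exact RTree.ptHeight_le_rpw T
end

section
/- If a heavy path in the heavy-rooted-pathwidth decomposition of T descends to a light child u of a vertex v (i.e., one crosses a light edge from v to u), then rpw(T(u)) < rpw(T(v)). Consequently, any root-to-leaf path in T crosses at most rpw(T) − 1 light edges. -/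
/-- Maximum number of light edges on a root-to-leaf path: an edge to a child `c` is
(possibly) light iff `c` does not attain the maximum `rpw` among the children, or
the maximum is attained by more than one child (so that the count is valid under
every tie-breaking choice of the heavy child). -/
def RTree.lightDepth : RTree → ℕ
  | .node ts =>
    let k := (ts.map RTree.rpw).foldr max 0
    let cnt := (ts.map RTree.rpw).count k
    (ts.attach.map (fun x =>
      if RTree.rpw x.1 = k ∧ cnt = 1 then RTree.lightDepth x.1
      else RTree.lightDepth x.1 + 1)).foldr max 0
decreasing_by
  all_goals
    have := List.sizeOf_lt_of_mem x.2
    simp [RTree.node.sizeOf_spec]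
    omega

/-!
A child whose `rpw` is the unique maximum `k` among its siblings has the same `rpw` as its
parent; for any other child, either its `rpw` is below `k ≤ rpw v`, or the maximum is tied and
`rpw v = k + 1`. So along a root-to-leaf path `rpw` drops by at least one at each light edge,
and it never goes below `1`.
-/

namespace RTree

theorem rpw_node (ts : List RTree) :
    rpw (node ts) =
      if (ts.map rpw).count ((ts.map rpw).foldr max 0) = 1 then (ts.map rpw).foldr max 0
      else (ts.map rpw).foldr max 0 + 1 := by
  rw [rpw]
  simp only [List.attach_map_val]

theorem rpw_le_foldr_max_of_mem {ts : List RTree} {c : RTree} (hc : c ∈ ts) :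
    c.rpw ≤ (ts.map rpw).foldr max 0 :=
  List.le_max_of_le' 0 (List.mem_map_of_mem hc) le_rfl

theorem foldr_max_le_rpw_node (ts : List RTree) : (ts.map rpw).foldr max 0 ≤ rpw (node ts) := by
  rw [rpw_node]
  split <;> omega

theorem rpw_le_rpw_node_of_mem {ts : List RTree} {c : RTree} (hc : c ∈ ts) :
    c.rpw ≤ rpw (node ts) :=
  (rpw_le_foldr_max_of_mem hc).trans (foldr_max_le_rpw_node ts)

theorem one_le_rpw_s9 : ∀ T : RTree, 1 ≤ T.rpw
  | node [] => by simp [rpw_node]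
  | node (c :: ts) => (one_le_rpw_s9 c).trans (rpw_le_rpw_node_of_mem List.mem_cons_self)

theorem rpw_node_eq_of_heavy {ts : List RTree} {c : RTree}
    (hheavy : c.rpw = (ts.map rpw).foldr max 0 ∧
      (ts.map rpw).count ((ts.map rpw).foldr max 0) = 1) :
    rpw (node ts) = c.rpw := by
  rw [rpw_node, if_pos hheavy.2, hheavy.1]

theorem rpw_lt_rpw_node_of_not_heavy {ts : List RTree} {c : RTree} (hc : c ∈ ts)
    (hlight : ¬(c.rpw = (ts.map rpw).foldr max 0 ∧
      (ts.map rpw).count ((ts.map rpw).foldr max 0) = 1)) :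
    c.rpw < rpw (node ts) := by
  have hle := rpw_le_foldr_max_of_mem hc
  rw [rpw_node]
  split <;> omega

theorem lightDepth_le_rpw_sub_one : ∀ T : RTree, T.lightDepth ≤ T.rpw - 1
  | node ts => by
    rw [lightDepth]
    refine List.max_le_of_forall_le _ _ fun d hd => ?_
    obtain ⟨⟨c, hc⟩, -, rfl⟩ := List.mem_map.mp hd
    dsimp only
    have ih := lightDepth_le_rpw_sub_one c
    split
    case isTrue hheavy =>
      rw [rpw_node_eq_of_heavy hheavy]
      exact ih
    case isFalse hlight =>
      have hlt := rpw_lt_rpw_node_of_not_heavy hc hlight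
      have hpos := one_le_rpw_s9 c
      omega

end RTree

/-- (a) descending along a light edge strictly decreases the rooted
pathwidth: if `c` is a (possibly-)light child of the root of `node ts` — i.e. `c`
does not uniquely attain the maximum rooted pathwidth `k` among the children —
then `rpw c < rpw (node ts)`; (b) consequently, every root-to-leaf path crosses at
most `rpw T − 1` light edges. -/
theorem stmt_9 :
    (∀ (ts : List RTree) (c : RTree), c ∈ ts →
      (RTree.rpw c < (ts.map RTree.rpw).foldr max 0 ∨
        2 ≤ (ts.map RTree.rpw).count ((ts.map RTree.rpw).foldr max 0)) →
      RTree.rpw c < RTree.rpw (.node ts)) ∧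
    (∀ T : RTree, T.lightDepth ≤ T.rpw - 1) :=
  ⟨fun _ _ hc hlight => RTree.rpw_lt_rpw_node_of_not_heavy hc (by omega),
    RTree.lightDepth_le_rpw_sub_one⟩
end

section
/- Given a planar grid drawing Γ of a tree with diameter d, scale it by S = 2·rpw·d·(4d+1) to obtain Γ₁. Then for every edge e = (v,u) with v the start vertex, there is a lattice point z_e on the segment of e in Γ₁ such that: (1) the disk of radius rpw·d centered at z_e is contained in the disk of radius rpw·d·(4d+1) centered at Γ₁(v); and (2) for any two distinct edges e₁, e₂ with a common start vertex v, the disks of radius rpw around z_{e₁} and z_{e₂} are disjoint. -/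
/-!
The chosen point on the edge `(v, u)` is `S • Γ v + c • (Γ u - Γ v)` with `c = 2·rpw·d`, i.e. the
scaled copy of `Γ u` as seen from `v` at scale `c` instead of `S = c·(4d+1)`. It is a lattice point
on the scaled edge at distance `c·|Γ u - Γ v| ≤ c·d` from `S • Γ v`, which gives (1). Two such
points for edges out of `v` are at distance `c·|Γ u₁ - Γ u₂| ≥ c ≥ 2·rpw`, because distinct lattice
points are at distance at least `1` (which also forces `d ≥ 1`), giving (2).
-/

open Metric

def IsLatticePoint {ι : Type*} (x : EuclideanSpace ℝ ι) : Prop :=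
  ∀ i, ∃ n : ℤ, x i = n

namespace IsLatticePoint

variable {ι : Type*} {x y : EuclideanSpace ℝ ι}

theorem add (hx : IsLatticePoint x) (hy : IsLatticePoint y) : IsLatticePoint (x + y) := by
  intro i
  obtain ⟨m, hm⟩ := hx i
  obtain ⟨n, hn⟩ := hy i
  exact ⟨m + n, by simp [hm, hn]⟩

theorem sub (hx : IsLatticePoint x) (hy : IsLatticePoint y) : IsLatticePoint (x - y) := by
  intro i
  obtain ⟨m, hm⟩ := hx i
  obtain ⟨n, hn⟩ := hy i
  exact ⟨m - n, by simp [hm, hn]⟩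

theorem natCast_smul (hx : IsLatticePoint x) (k : ℕ) : IsLatticePoint ((k : ℝ) • x) := by
  intro i
  obtain ⟨m, hm⟩ := hx i
  exact ⟨k * m, by simp [hm]⟩

theorem one_le_dist [Fintype ι] (hx : IsLatticePoint x) (hy : IsLatticePoint y) (hxy : x ≠ y) :
    1 ≤ dist x y := by
  obtain ⟨i, hi⟩ : ∃ i, x i ≠ y i := by
    by_contra! h
    exact hxy (PiLp.ext h)
  obtain ⟨m, hm⟩ := hx i
  obtain ⟨n, hn⟩ := hy i
  have hmn : m ≠ n := by rintro rfl; exact hi (hm.trans hn.symm)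
  calc 1 ≤ dist m n := Int.pairwise_one_le_dist hmn
    _ = dist (x i) (y i) := by rw [hm, hn, Int.dist_cast_real]
    _ ≤ dist x y := PiLp.dist_apply_le x y i

end IsLatticePoint

section Rescale

variable {E : Type*} [NormedAddCommGroup E] [NormedSpace ℝ E]

theorem smul_add_smul_sub_mem_segment {S c : ℝ} (hc : 0 ≤ c) (hcS : c ≤ S) (a b : E) :
    S • a + c • (b - a) ∈ segment ℝ (S • a) (S • b) := by
  rcases hcS.eq_or_lt with rfl | hcS
  · simpa [smul_sub] using right_mem_segment ℝ (c • a) (c • b)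
  have hS : S ≠ 0 := (hc.trans_lt hcS).ne'
  rw [segment_eq_image']
  refine ⟨c / S, ⟨div_nonneg hc (hc.trans hcS.le), div_le_one_of_le₀ hcS.le (hc.trans hcS.le)⟩, ?_⟩
  dsimp only
  rw [← smul_sub, smul_smul, div_mul_cancel₀ c hS]

theorem dist_add_smul_sub_left {c : ℝ} (hc : 0 ≤ c) (p a b : E) :
    dist (p + c • (b - a)) p = c * dist b a := by
  rw [dist_self_add_left, norm_smul, Real.norm_of_nonneg hc, dist_eq_norm]

theorem dist_add_smul_sub_add_smul_sub {c : ℝ} (hc : 0 ≤ c) (p a b₁ b₂ : E) :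
    dist (p + c • (b₁ - a)) (p + c • (b₂ - a)) = c * dist b₁ b₂ := by
  rw [dist_add_left, dist_smul₀, Real.norm_of_nonneg hc, dist_sub_right]

end Rescale

theorem stmt_17_general {V : Type*} (G : SimpleGraph V)
    (pos : V → EuclideanSpace ℝ (Fin 2))
    (hgrid : ∀ v i, ∃ n : ℤ, pos v i = (n : ℝ))
    (hinj : Function.Injective pos)
    (d rpw S : ℕ)
    (hd : ∀ a b : V, dist (pos a) (pos b) ≤ (d : ℝ))
    (hS : S = 2 * rpw * d * (4 * d + 1)) :
    ∃ z : V → V → EuclideanSpace ℝ (Fin 2),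
      (∀ v u : V, G.Adj v u →
        (∀ i, ∃ n : ℤ, z v u i = (n : ℝ)) ∧
        z v u ∈ segment ℝ ((S : ℝ) • pos v) ((S : ℝ) • pos u) ∧
        Metric.ball (z v u) ((rpw : ℝ) * d) ⊆
          Metric.ball ((S : ℝ) • pos v) ((rpw : ℝ) * d * (4 * d + 1))) ∧
      (∀ v u₁ u₂ : V, G.Adj v u₁ → G.Adj v u₂ → u₁ ≠ u₂ →
        Disjoint (Metric.ball (z v u₁) (rpw : ℝ))
          (Metric.ball (z v u₂) (rpw : ℝ))) := by
  set c : ℕ := 2 * rpw * d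
  have hΓ : ∀ v, IsLatticePoint (pos v) := hgrid
  have hSc : (S : ℝ) = c * (4 * d + 1) := by rw [hS]; push_cast; ring
  refine ⟨fun v u => (S : ℝ) • pos v + (c : ℝ) • (pos u - pos v), fun v u _ => ⟨?_, ?_, ?_⟩, ?_⟩
  · exact ((hΓ v).natCast_smul S).add (((hΓ u).sub (hΓ v)).natCast_smul c)
  · exact smul_add_smul_sub_mem_segment c.cast_nonneg (by rw [hSc]; nlinarith) _ _
  · refine ball_subset_ball' ?_
    rw [dist_add_smul_sub_left c.cast_nonneg]
    have := mul_le_mul_of_nonneg_left (hd u v) (by positivity : (0 : ℝ) ≤ 2 * rpw * d)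
    have : (0 : ℝ) ≤ rpw * d * d := by positivity
    push_cast [c]
    linarith
  · intro v u₁ u₂ _ _ hne
    refine ball_disjoint_ball ?_
    rw [dist_add_smul_sub_add_smul_sub c.cast_nonneg]
    have h₁ := (hΓ u₁).one_le_dist (hΓ u₂) (hinj.ne hne)
    have h₂ := one_le_mul_of_one_le_of_one_le (h₁.trans (hd u₁ u₂)) h₁
    have := mul_le_mul_of_nonneg_left h₂ (by positivity : (0 : ℝ) ≤ 2 * rpw)
    push_cast [c]
    linarith

/-- let `pos` be a planar (crossing-free) straight-line grid drawing
of a tree with pairwise vertex distances at most the integer `d ≥ 1` (the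
diameter), let `rpw ≥ 1` be an integer (the rooted pathwidth), and scale by
`S = 2·rpw·d·(4d+1)`.  Then one can choose, for every directed edge `(v,u)`
(`v` the start vertex), a lattice point `z v u` on the scaled segment from
`S•pos v` to `S•pos u` such that: (1) the disk of radius `rpw·d` around `z v u`
is contained in the disk of radius `rpw·d·(4d+1)` around `S•pos v`; and (2) for
two distinct edges with common start vertex `v`, the disks of radius `rpw`
around the chosen points are disjoint. -/
theorem stmt_17 {V : Type*} [Fintype V] (G : SimpleGraph V) (hT : G.IsTree)
    (pos : V → EuclideanSpace ℝ (Fin 2))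
    (hgrid : ∀ v i, ∃ n : ℤ, pos v i = (n : ℝ))
    (hinj : Function.Injective pos)
    (hcf : ∀ a b c e : V, G.Adj a b → G.Adj c e →
      ∀ p, p ∈ segment ℝ (pos a) (pos b) → p ∈ segment ℝ (pos c) (pos e) →
        ∃ x : V, (x = a ∨ x = b) ∧ (x = c ∨ x = e) ∧ p = pos x)
    (d rpw S : ℕ) (hd1 : 1 ≤ d) (hrpw : 1 ≤ rpw)
    (hd : ∀ a b : V, dist (pos a) (pos b) ≤ (d : ℝ))
    (hS : S = 2 * rpw * d * (4 * d + 1)) :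
    ∃ z : V → V → EuclideanSpace ℝ (Fin 2),
      (∀ v u : V, G.Adj v u →
        (∀ i, ∃ n : ℤ, z v u i = (n : ℝ)) ∧
        z v u ∈ segment ℝ ((S : ℝ) • pos v) ((S : ℝ) • pos u) ∧
        Metric.ball (z v u) ((rpw : ℝ) * d) ⊆
          Metric.ball ((S : ℝ) • pos v) ((rpw : ℝ) * d * (4 * d + 1))) ∧
      (∀ v u₁ u₂ : V, G.Adj v u₁ → G.Adj v u₂ → u₁ ≠ u₂ →
        Disjoint (Metric.ball (z v u₁) (rpw : ℝ))
          (Metric.ball (z v u₂) (rpw : ℝ))) :=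
  stmt_17_general G pos hgrid hinj d rpw S hd hS
end
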